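/- arXiv:1407.4376 — 2 statements merged into one kernel-verified Lean document; each statement's English description precedes it below -/
import Mathlib

section
/- If ε_0, ε_1,…, ε_n are i.i.d. mean-zero random variables with variance η and finite fourth moment, independent of a process X with E[(X_{i/n} − X_{(i−1)/n})²] ≤ K/n, then the estimator η̂ = (1/(2n)) Σ_{i=1}^n (Y_{i/n} − Y_{(i−1)/n})², with Y_{i/n} = X_{i/n} + ε_i, satisfies E[(η̂ − η)²] ≤ C/n for a constant C; in particular η̂ = η + O_P(n^{-1/2}). -/
/-!
Write `Δᵢ` for the increments of `X` and `aᵢ = ε_{i+1} - εᵢ` for those of the noise, so that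
`η̂ - η = (2n)⁻¹ ∑ Δᵢ² + n⁻¹ ∑ Δᵢ aᵢ + (2n)⁻¹ ∑ (aᵢ² - 2η)`. The first sum is bounded by
Cauchy–Schwarz and `E[Δᵢ⁴] ≤ K/n`. The summands of the other two are uncorrelated as soon as
`|i - j| ≥ 2`, because `(aᵢ)` is `1`-dependent and independent of `X`; so each of these sums has a
second moment of order `n` instead of `n²`.

The moment hypotheses are Bochner integrals, which vanish for non-integrable functions. If
`(η̂ - η)²` is not integrable the claim is trivial; otherwise `∑ (Δᵢ + aᵢ)²` is in `L²`, so every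
`Δᵢ + aᵢ` is in `L⁴`, and independence splits this into `Δᵢ, εₖ ∈ L⁴`.
-/

open MeasureTheory ProbabilityTheory Finset

variable {Ω : Type*} [MeasurableSpace Ω]

section Moments

variable {μ : Measure Ω}

theorem memLp_four_iff_integrable_pow_four {f : Ω → ℝ}
    (hf : AEStronglyMeasurable f μ) : MemLp f 4 μ ↔ Integrable (fun ω => f ω ^ 4) μ := by
  rw [← integrable_norm_rpow_iff hf (by norm_num) (by norm_num)]
  have h4 : (4 : ENNReal).toReal = ((4 : ℕ) : ℝ) := by norm_num
  simp only [h4, Real.rpow_natCast, Real.norm_eq_abs, Even.pow_abs (by decide : Even 4)]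

theorem MeasureTheory.MemLp.sq_memLp_two {f : Ω → ℝ} (hf : MemLp f 4 μ) :
    MemLp (fun ω => f ω ^ 2) 2 μ := by
  refine (memLp_two_iff_integrable_sq (hf.1.pow 2)).2 ?_
  simpa only [Pi.pow_apply, ← pow_mul] using (memLp_four_iff_integrable_pow_four hf.1).1 hf

theorem memLp_four_of_memLp_two_sum_sq {ι : Type*} {s : Finset ι}
    {g : ι → Ω → ℝ} (hg : ∀ i ∈ s, AEStronglyMeasurable (g i) μ)
    (h : MemLp (fun ω => ∑ i ∈ s, g i ω ^ 2) 2 μ) {i : ι} (hi : i ∈ s) : MemLp (g i) 4 μ := by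
  have hsq : MemLp (fun ω => g i ω ^ 2) 2 μ :=
    h.mono ((hg i hi).pow 2) (.of_forall fun ω => by
      simp only [Real.norm_eq_abs, abs_pow, sq_abs]
      exact (single_le_sum (f := fun j => g j ω ^ 2) (fun j _ => sq_nonneg _) hi).trans
        (le_abs_self _))
  rw [memLp_four_iff_integrable_pow_four (hg i hi)]
  simpa only [← pow_mul] using hsq.integrable_sq

theorem integral_sq_add_add_le {x y z : Ω → ℝ}
    (hx : Integrable (fun ω => x ω ^ 2) μ) (hy : Integrable (fun ω => y ω ^ 2) μ)
    (hz : Integrable (fun ω => z ω ^ 2) μ) :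
    ∫ ω, (x ω + y ω + z ω) ^ 2 ∂μ
      ≤ 3 * (∫ ω, x ω ^ 2 ∂μ + ∫ ω, y ω ^ 2 ∂μ + ∫ ω, z ω ^ 2 ∂μ) := by
  have hsum : Integrable (fun ω => x ω ^ 2 + y ω ^ 2 + z ω ^ 2) μ := (hx.add hy).add hz
  have hrhs : ∫ ω, 3 * (x ω ^ 2 + y ω ^ 2 + z ω ^ 2) ∂μ
      = 3 * (∫ ω, x ω ^ 2 ∂μ + ∫ ω, y ω ^ 2 ∂μ + ∫ ω, z ω ^ 2 ∂μ) := by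
    rw [integral_const_mul, integral_add (f := fun ω => x ω ^ 2 + y ω ^ 2) (hx.add hy) hz,
      integral_add hx hy]
  rw [← hrhs]
  refine integral_mono_of_nonneg (.of_forall fun ω => sq_nonneg _)
    (hsum.const_mul 3) (.of_forall fun ω => ?_)
  nlinarith [sq_nonneg (x ω - y ω), sq_nonneg (y ω - z ω), sq_nonneg (x ω - z ω)]

theorem integral_sq_sum_le_card_mul_sum {ι : Type*} {s : Finset ι}
    {f : ι → Ω → ℝ} (hf : ∀ i ∈ s, Integrable (fun ω => f i ω ^ 2) μ) :
    ∫ ω, (∑ i ∈ s, f i ω) ^ 2 ∂μ ≤ #s * ∑ i ∈ s, ∫ ω, f i ω ^ 2 ∂μ := by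
  rw [← integral_finsetSum s hf, ← integral_const_mul]
  exact integral_mono_of_nonneg (.of_forall fun ω => sq_nonneg _)
    ((integrable_finsetSum s hf).const_mul _) (.of_forall fun ω => sq_sum_le_card_mul_sum_sq)

theorem integral_sq_sum_sq_le {n : ℕ} {D : Fin n → Ω → ℝ} {B : ℝ} (hD : ∀ i, MemLp (D i) 4 μ)
    (hB : ∀ i, ∫ ω, D i ω ^ 4 ∂μ ≤ B) : ∫ ω, (∑ i, D i ω ^ 2) ^ 2 ∂μ ≤ n * (n * B) := by
  refine (integral_sq_sum_le_card_mul_sum fun i _ => (hD i).sq_memLp_two.integrable_sq).trans ?_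
  simp only [card_univ, Fintype.card_fin, ← pow_mul]
  gcongr
  exact (sum_le_sum fun i _ => hB i).trans (by simp)

theorem sum_sum_le_three_mul_of_banded {n : ℕ} {c : Fin n → Fin n → ℝ} {B : ℝ}
    (hc : ∀ i j, |c i j| ≤ B) (h0 : ∀ i j : Fin n, (i : ℕ) + 2 ≤ j ∨ (j : ℕ) + 2 ≤ i → c i j = 0) :
    ∑ i, ∑ j, c i j ≤ 3 * n * B := by
  have hrow : ∀ i, ∑ j, c i j ≤ 3 * B := by
    intro i
    set near := univ.filter fun j : Fin n => (i : ℕ) ≤ j + 1 ∧ (j : ℕ) ≤ i + 1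
    have hnear : #near ≤ 3 := by
      calc #near ≤ #(Finset.Icc ((i : ℕ) - 1) (i + 1)) :=
            card_le_card_of_injOn (fun j : Fin n => (j : ℕ))
              (fun j hj => by simp [near] at hj ⊢; omega)
              Fin.val_injective.injOn
        _ ≤ 3 := by simp only [Nat.card_Icc]; omega
    calc ∑ j, c i j = ∑ j ∈ near, c i j :=
          (sum_subset (subset_univ _) fun j _ hj => h0 i j (by simp [near] at hj; omega)).symm
      _ ≤ ∑ j ∈ near, B := sum_le_sum fun j _ => (le_abs_self _).trans (hc i j)
      _ = #near * B := by rw [sum_const, nsmul_eq_mul]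
      _ ≤ 3 * B := by gcongr; exact (abs_nonneg _).trans (hc i i); exact_mod_cast hnear
  calc ∑ i, ∑ j, c i j ≤ ∑ _i : Fin n, 3 * B := sum_le_sum fun i _ => hrow i
    _ = 3 * n * B := by simp; ring

theorem abs_integral_mul_le_half_add {f g : Ω → ℝ} (hf : MemLp f 2 μ)
    (hg : MemLp g 2 μ) :
    |∫ ω, f ω * g ω ∂μ| ≤ (∫ ω, f ω ^ 2 ∂μ + ∫ ω, g ω ^ 2 ∂μ) / 2 := by
  calc |∫ ω, f ω * g ω ∂μ| ≤ ∫ ω, |f ω * g ω| ∂μ := abs_integral_le_integral_abs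
    _ ≤ ∫ ω, (f ω ^ 2 + g ω ^ 2) / 2 ∂μ :=
        integral_mono (hf.integrable_mul hg).abs
          ((hf.integrable_sq.add hg.integrable_sq).div_const 2) fun ω => by
            rw [abs_mul]
            nlinarith [sq_nonneg (|f ω| - |g ω|), sq_abs (f ω), sq_abs (g ω)]
    _ = (∫ ω, f ω ^ 2 ∂μ + ∫ ω, g ω ^ 2 ∂μ) / 2 := by
        rw [integral_div, integral_add hf.integrable_sq hg.integrable_sq]

theorem integral_sq_sum_le_of_one_dependent {n : ℕ} {f : Fin n → Ω → ℝ} {B : ℝ}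
    (hf : ∀ i, MemLp (f i) 2 μ) (hB : ∀ i, ∫ ω, f i ω ^ 2 ∂μ ≤ B)
    (horth : ∀ i j : Fin n, (i : ℕ) + 2 ≤ j → ∫ ω, f i ω * f j ω ∂μ = 0) :
    ∫ ω, (∑ i, f i ω) ^ 2 ∂μ ≤ 3 * n * B := by
  have hprod : ∀ i j, Integrable (fun ω => f i ω * f j ω) μ :=
    fun i j => (hf i).integrable_mul (hf j)
  have hexpand : ∫ ω, (∑ i, f i ω) ^ 2 ∂μ = ∑ i, ∑ j, ∫ ω, f i ω * f j ω ∂μ := by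
    simp_rw [sq, sum_mul_sum]
    rw [integral_finsetSum _ fun i _ => integrable_finsetSum _ fun j _ => hprod i j]
    exact sum_congr rfl fun i _ => integral_finsetSum _ fun j _ => hprod i j
  rw [hexpand]
  refine sum_sum_le_three_mul_of_banded (fun i j => ?_) fun i j hij => ?_
  · have := hB i; have := hB j
    linarith [abs_integral_mul_le_half_add (hf i) (hf j)]
  · rcases hij with h | h
    · exact horth i j h
    · simpa only [mul_comm] using horth j i h

theorem integral_sub_pow_four_le {Y Z : Ω → ℝ}
    (hY : Integrable (fun ω => Y ω ^ 4) μ) (hZ : Integrable (fun ω => Z ω ^ 4) μ) :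
    ∫ ω, (Y ω - Z ω) ^ 4 ∂μ ≤ 8 * ∫ ω, Y ω ^ 4 ∂μ + 8 * ∫ ω, Z ω ^ 4 ∂μ := by
  rw [← integral_const_mul, ← integral_const_mul, ← integral_add (hY.const_mul 8) (hZ.const_mul 8)]
  refine integral_mono_of_nonneg (.of_forall fun ω => by positivity)
    ((hY.const_mul 8).add (hZ.const_mul 8)) (.of_forall fun ω => ?_)
  nlinarith [sq_nonneg (Y ω + Z ω), sq_nonneg (Y ω - Z ω), sq_nonneg (Y ω ^ 2 - Z ω ^ 2),
    sq_nonneg ((Y ω - Z ω) * (Y ω + Z ω))]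

theorem ProbabilityTheory.IndepFun.integral_sq_sub [IsFiniteMeasure μ] {Y Z : Ω → ℝ}
    (h : IndepFun Y Z μ) (hY : MemLp Y 2 μ) (hZ : MemLp Z 2 μ) (hY0 : ∫ ω, Y ω ∂μ = 0)
    (hZ0 : ∫ ω, Z ω ∂μ = 0) :
    ∫ ω, (Y ω - Z ω) ^ 2 ∂μ = ∫ ω, Y ω ^ 2 ∂μ + ∫ ω, Z ω ^ 2 ∂μ := by
  have hYZ0 : ∫ ω, (Y - Z) ω ∂μ = 0 := by
    simp only [Pi.sub_apply]
    rw [integral_sub (hY.integrable one_le_two) (hZ.integrable one_le_two), hY0, hZ0, sub_zero]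
  have hvar := variance_sub hY hZ
  rw [h.covariance_eq_zero hY hZ, variance_of_integral_eq_zero (hY.sub hZ).aemeasurable hYZ0,
    variance_of_integral_eq_zero hY.aemeasurable hY0,
    variance_of_integral_eq_zero hZ.aemeasurable hZ0] at hvar
  simpa using hvar

theorem ProbabilityTheory.IndepFun.memLp_two_mul {U V : Ω → ℝ} (h : IndepFun U V μ)
    (hU : MemLp U 2 μ) (hV : MemLp V 2 μ) : MemLp (U * V) 2 μ := by
  refine (memLp_two_iff_integrable_sq (hU.1.mul hV.1)).2 ?_
  have hsq : IndepFun (fun ω => U ω ^ 2) (fun ω => V ω ^ 2) μ :=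
    h.comp (φ := fun x : ℝ => x ^ 2) (ψ := fun x : ℝ => x ^ 2) (by fun_prop) (by fun_prop)
  exact (hsq.integrable_mul hU.integrable_sq hV.integrable_sq).congr
    (.of_forall fun ω => by simp only [Pi.mul_apply]; ring)

theorem integral_sq_sum_mul_le_of_indepFun {n : ℕ} {D a : Fin n → Ω → ℝ}
    (hD : ∀ i, MemLp (D i) 2 μ) (ha : ∀ i, MemLp (a i) 2 μ)
    (hind : IndepFun (fun ω i => D i ω) (fun ω i => a i ω) μ)
    {K M : ℝ} (hDK : ∀ i, ∫ ω, D i ω ^ 2 ∂μ ≤ K) (haM : ∀ i, ∫ ω, a i ω ^ 2 ∂μ ≤ M)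
    (horth : ∀ i j : Fin n, (i : ℕ) + 2 ≤ j → ∫ ω, a i ω * a j ω ∂μ = 0) :
    ∫ ω, (∑ i, D i ω * a i ω) ^ 2 ∂μ ≤ 3 * n * (K * M) := by
  have hpair : ∀ i j, IndepFun (fun ω => D i ω * D j ω) (fun ω => a i ω * a j ω) μ := fun i j =>
    hind.comp (φ := fun v : Fin n → ℝ => v i * v j) (ψ := fun v : Fin n → ℝ => v i * v j)
      (by fun_prop) (by fun_prop)
  have hfactor : ∀ i j, ∫ ω, (D i ω * a i ω) * (D j ω * a j ω) ∂μ
      = (∫ ω, D i ω * D j ω ∂μ) * ∫ ω, a i ω * a j ω ∂μ := fun i j => by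
    rw [← (hpair i j).integral_fun_mul_eq_mul_integral ((hD i).1.mul (hD j).1)
      ((ha i).1.mul (ha j).1)]
    congr 1 with ω
    ring
  refine integral_sq_sum_le_of_one_dependent
    (fun i => (hind.comp (measurable_pi_apply i) (measurable_pi_apply i)).memLp_two_mul
      (hD i) (ha i))
    (fun i => ?_) (fun i j hij => ?_)
  · have hsq := hfactor i i
    simp only [← sq] at hsq
    rw [hsq]
    exact mul_le_mul (hDK i) (haM i) (integral_nonneg fun ω => sq_nonneg _)
      ((integral_nonneg fun ω => sq_nonneg _).trans (hDK i))
  · rw [hfactor, horth i j hij, mul_zero]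

end Moments

section Probability

variable {P : Measure Ω} [IsProbabilityMeasure P]

theorem ProbabilityTheory.IndepFun.memLp_left_of_memLp_add {U V : Ω → ℝ} (hU : Measurable U)
    (hV : Measurable V) (h : IndepFun U V P) {p : ENNReal} (hp : p ≠ ⊤)
    (hUV : MemLp (U + V) p P) : MemLp U p P := by
  rcases eq_or_ne p 0 with rfl | hp0
  · exact memLp_zero_iff_aestronglyMeasurable.2 hU.aestronglyMeasurable
  have hlaw : P.map (fun ω => (U ω, V ω)) = (P.map U).prod (P.map V) :=
    (indepFun_iff_map_prod_eq_prod_map_map hU.aemeasurable hV.aemeasurable).1 h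
  have hjoint :
      Integrable (fun q : ℝ × ℝ => ‖q.1 + q.2‖ ^ p.toReal) ((P.map U).prod (P.map V)) := by
    rw [← hlaw, integrable_map_measure (Measurable.aestronglyMeasurable (by fun_prop))
      (hU.prodMk hV).aemeasurable]
    exact (integrable_norm_rpow_iff hUV.1 hp0 hp).2 hUV
  have : IsProbabilityMeasure (P.map V) := Measure.isProbabilityMeasure_map hV.aemeasurable
  -- Fubini: for almost every value `v` of `V`, already `U + v` is in `Lᵖ`.
  obtain ⟨v, hv⟩ := hjoint.prod_left_ae.exists
  have hshift : MemLp (fun u : ℝ => u + v) p (P.map U) :=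
    (integrable_norm_rpow_iff (by fun_prop) hp0 hp).1 hv
  have hid : MemLp id p (P.map U) :=
    (hshift.sub (memLp_const v)).congr_norm aestronglyMeasurable_id (.of_forall fun u => by simp)
  exact (memLp_map_measure_iff aestronglyMeasurable_id hU.aemeasurable).1 hid

theorem ProbabilityTheory.IndepFun.memLp_left_of_memLp_sub {U V : Ω → ℝ} (hU : Measurable U)
    (hV : Measurable V) (h : IndepFun U V P) {p : ENNReal} (hp : p ≠ ⊤)
    (hUV : MemLp (U - V) p P) : MemLp U p P :=
  (h.comp measurable_id measurable_neg).memLp_left_of_memLp_add hU hV.neg hp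
    (by simpa only [sub_eq_add_neg] using hUV)

theorem memLp_four_of_integrable_estimator {n : ℕ} {D a : Fin n → Ω → ℝ}
    (hDm : ∀ i, Measurable (D i)) (ham : ∀ i, Measurable (a i))
    (hind : IndepFun (fun ω i => D i ω) (fun ω i => a i ω) P) {c η : ℝ} (hc : c ≠ 0)
    (hint : Integrable (fun ω => (c * ∑ i, (D i ω + a i ω) ^ 2 - η) ^ 2) P) (i : Fin n) :
    MemLp (D i) 4 P ∧ MemLp (a i) 4 P := by
  have hsum : MemLp (fun ω => ∑ i, (D i ω + a i ω) ^ 2) 2 P := by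
    have h := (memLp_two_iff_integrable_sq (by fun_prop)).2 hint
    exact ((h.add (memLp_const η)).const_mul c⁻¹).ae_eq (.of_forall fun ω => by simp [hc])
  have hadd : MemLp (D i + a i) 4 P :=
    memLp_four_of_memLp_two_sum_sq (fun i _ => by fun_prop) hsum (mem_univ i)
  have hind_i : IndepFun (D i) (a i) P := hind.comp (measurable_pi_apply i) (measurable_pi_apply i)
  exact ⟨hind_i.memLp_left_of_memLp_add (hDm i) (ham i) (by norm_num) hadd,
    hind_i.symm.memLp_left_of_memLp_add (ham i) (hDm i) (by norm_num) (add_comm (D i) (a i) ▸ hadd)⟩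

theorem estimator_sub_eq {n : ℕ} (hn : (n : ℝ) ≠ 0) (d a : Fin n → ℝ) (η : ℝ) :
    1 / (2 * n) * ∑ i, (d i + a i) ^ 2 - η
      = 1 / (2 * n) * ∑ i, d i ^ 2 + 1 / n * ∑ i, d i * a i
        + 1 / (2 * n) * ∑ i, (a i ^ 2 - 2 * η) := by
  have hsq : ∑ i, (d i + a i) ^ 2 = ∑ i, d i ^ 2 + 2 * ∑ i, d i * a i + ∑ i, a i ^ 2 := by
    simp only [add_sq, sum_add_distrib, mul_sum, mul_assoc]
  rw [hsq, sum_sub_distrib, sum_const, card_univ, Fintype.card_fin, nsmul_eq_mul]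
  field_simp
  ring

theorem integral_sq_estimator_sub_le {n : ℕ} (hn : 0 < n) {D a : Fin n → Ω → ℝ} {η α β γ : ℝ}
    (hD : ∀ i, MemLp (D i) 4 P) (ha : ∀ i, MemLp (a i) 4 P)
    (hind : IndepFun (fun ω i => D i ω) (fun ω i => a i ω) P)
    (hα : ∫ ω, (∑ i, D i ω ^ 2) ^ 2 ∂P ≤ α) (hβ : ∫ ω, (∑ i, D i ω * a i ω) ^ 2 ∂P ≤ β)
    (hγ : ∫ ω, (∑ i, (a i ω ^ 2 - 2 * η)) ^ 2 ∂P ≤ γ) :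
    ∫ ω, (1 / (2 * (n : ℝ)) * ∑ i, (D i ω + a i ω) ^ 2 - η) ^ 2 ∂P
      ≤ 3 * ((α + γ) / (4 * n ^ 2) + β / n ^ 2) := by
  have hn' : (n : ℝ) ≠ 0 := by positivity
  have hL2 : ∀ (c : ℝ) (f : Fin n → Ω → ℝ), (∀ i, MemLp (f i) 2 P) →
      Integrable (fun ω => (c * ∑ i, f i ω) ^ 2) P :=
    fun c f hf => ((memLp_finsetSum univ fun i _ => hf i).const_mul c).integrable_sq
  simp_rw [estimator_sub_eq hn']
  refine (integral_sq_add_add_le (hL2 _ _ fun i => (hD i).sq_memLp_two)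
    (hL2 _ (fun i ω => D i ω * a i ω) fun i =>
      (hind.comp (measurable_pi_apply i) (measurable_pi_apply i)).memLp_two_mul
        ((hD i).mono_exponent (by norm_num)) ((ha i).mono_exponent (by norm_num)))
    (hL2 _ (fun i ω => a i ω ^ 2 - 2 * η) fun i => (ha i).sq_memLp_two.sub (memLp_const _))
    ).trans ?_
  simp_rw [mul_pow, integral_const_mul]
  calc _ ≤ 3 * ((1 / (2 * (n : ℝ))) ^ 2 * α + (1 / (n : ℝ)) ^ 2 * β
          + (1 / (2 * (n : ℝ))) ^ 2 * γ) := by gcongr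
    _ = 3 * ((α + γ) / (4 * n ^ 2) + β / n ^ 2) := by field_simp; ring

def increment {n : ℕ} (Z : Fin (n + 1) → Ω → ℝ) (i : Fin n) : Ω → ℝ :=
  Z i.succ - Z i.castSucc

section Increments

variable {n : ℕ}

theorem measurable_increment {Z : Fin (n + 1) → Ω → ℝ} (hZ : ∀ k, Measurable (Z k)) (i : Fin n) :
    Measurable (increment Z i) :=
  (hZ _).sub (hZ _)

theorem ProbabilityTheory.IndepFun.increment {μ : Measure Ω} {X ε : Fin (n + 1) → Ω → ℝ}
    (h : IndepFun (fun ω k => X k ω) (fun ω k => ε k ω) μ) :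
    IndepFun (fun ω i => increment X i ω) (fun ω i => increment ε i ω) μ :=
  h.comp (φ := fun (v : Fin (n + 1) → ℝ) (i : Fin n) => v i.succ - v i.castSucc)
    (ψ := fun (v : Fin (n + 1) → ℝ) (i : Fin n) => v i.succ - v i.castSucc)
    (by fun_prop) (by fun_prop)

theorem ProbabilityTheory.iIndepFun.indepFun_increment {μ : Measure Ω}
    {ε : Fin (n + 1) → Ω → ℝ} (hε : iIndepFun ε μ) (hεm : ∀ k, Measurable (ε k)) {i j : Fin n}
    (hij : (i : ℕ) + 2 ≤ j) : IndepFun (increment ε i) (increment ε j) μ :=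
  hε.indepFun_sub_sub hεm _ _ _ _ (by simp [Fin.ext_iff]; omega) (by simp [Fin.ext_iff]; omega)
    (by simp [Fin.ext_iff]; omega) (by simp [Fin.ext_iff]; omega)

theorem ProbabilityTheory.iIndepFun.memLp_of_memLp_increment (hn : 0 < n)
    {ε : Fin (n + 1) → Ω → ℝ} (hε : iIndepFun ε P) (hεm : ∀ k, Measurable (ε k))
    {p : ENNReal} (hp : p ≠ ⊤) (h : ∀ i, MemLp (increment ε i) p P) (k : Fin (n + 1)) :
    MemLp (ε k) p P := by
  obtain ⟨m, rfl⟩ : ∃ m, n = m + 1 := ⟨n - 1, by omega⟩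
  induction k using Fin.lastCases with
  | last =>
    exact (hε.indepFun (Fin.castSucc_lt_succ (i := Fin.last m)).ne').memLp_left_of_memLp_sub
      (hεm _) (hεm _) hp (h (Fin.last m))
  | cast j =>
    exact (hε.indepFun Fin.castSucc_lt_succ.ne).memLp_left_of_memLp_sub (hεm _) (hεm _) hp
      (by simpa only [increment, neg_sub] using (h j).neg)

theorem ProbabilityTheory.iIndepFun.integral_increment_sq {ε : Fin (n + 1) → Ω → ℝ} {η : ℝ}
    (hε : iIndepFun ε P) (hε2 : ∀ k, MemLp (ε k) 2 P) (hmean : ∀ k, ∫ ω, ε k ω ∂P = 0)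
    (hvar : ∀ k, ∫ ω, ε k ω ^ 2 ∂P = η) (i : Fin n) :
    ∫ ω, increment ε i ω ^ 2 ∂P = 2 * η := by
  have h := (hε.indepFun (Fin.castSucc_lt_succ (i := i)).ne').integral_sq_sub (hε2 _) (hε2 _)
    (hmean _) (hmean _)
  rw [hvar, hvar] at h
  exact h.trans (two_mul η).symm

theorem ProbabilityTheory.iIndepFun.integral_increment_mul_eq_zero {μ : Measure Ω}
    {ε : Fin (n + 1) → Ω → ℝ} (hε : iIndepFun ε μ) (hεm : ∀ k, Measurable (ε k))
    (hε1 : ∀ k, Integrable (ε k) μ) (hmean : ∀ k, ∫ ω, ε k ω ∂μ = 0) {i j : Fin n}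
    (hij : (i : ℕ) + 2 ≤ j) : ∫ ω, increment ε i ω * increment ε j ω ∂μ = 0 := by
  rw [(hε.indepFun_increment hεm hij).integral_fun_mul_eq_mul_integral
    (measurable_increment hεm i).aestronglyMeasurable
    (measurable_increment hεm j).aestronglyMeasurable]
  simp [increment, integral_sub (hε1 _) (hε1 _), hmean]

theorem integral_sq_sum_increment_sq_sub_le {ε : Fin (n + 1) → Ω → ℝ} {η κ : ℝ}
    (hεm : ∀ k, Measurable (ε k)) (hε : iIndepFun ε P) (hε4 : ∀ k, MemLp (ε k) 4 P)
    (hmean : ∀ k, ∫ ω, ε k ω ∂P = 0) (hvar : ∀ k, ∫ ω, ε k ω ^ 2 ∂P = η)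
    (hfour : ∀ k, ∫ ω, ε k ω ^ 4 ∂P ≤ κ) :
    ∫ ω, (∑ i, (increment ε i ω ^ 2 - 2 * η)) ^ 2 ∂P ≤ 3 * n * (16 * κ) := by
  have ham := measurable_increment hεm
  have ha4 : ∀ i, MemLp (increment ε i) 4 P := fun i => (hε4 _).sub (hε4 _)
  have hsq := hε.integral_increment_sq (fun k => (hε4 k).mono_exponent (by norm_num)) hmean hvar
  have hε4int : ∀ k, Integrable (fun ω => ε k ω ^ 4) P := fun k =>
    (memLp_four_iff_integrable_pow_four (hεm k).aestronglyMeasurable).1 (hε4 k)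
  refine integral_sq_sum_le_of_one_dependent (fun i => (ha4 i).sq_memLp_two.sub (memLp_const _))
    (fun i => ?_) (fun i j hij => ?_)
  · calc ∫ ω, (increment ε i ω ^ 2 - 2 * η) ^ 2 ∂P
          = Var[fun ω => increment ε i ω ^ 2; P] := by
            rw [variance_eq_integral (by fun_prop), hsq]
      _ ≤ ∫ ω, increment ε i ω ^ 4 ∂P := by
            refine (variance_le_expectation_sq (by fun_prop)).trans_eq ?_
            simp only [Pi.pow_apply, ← pow_mul]
      _ ≤ 8 * κ + 8 * κ :=
            (integral_sub_pow_four_le (hε4int _) (hε4int _)).trans (by gcongr <;> exact hfour _)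
      _ = 16 * κ := by ring
  · have hind : IndepFun (fun ω => increment ε i ω ^ 2 - 2 * η)
        (fun ω => increment ε j ω ^ 2 - 2 * η) P :=
      (hε.indepFun_increment hεm hij).comp (φ := fun x : ℝ => x ^ 2 - 2 * η)
        (ψ := fun x : ℝ => x ^ 2 - 2 * η) (by fun_prop) (by fun_prop)
    rw [hind.integral_fun_mul_eq_mul_integral (by fun_prop) (by fun_prop),
      integral_sub ((ha4 i).sq_memLp_two.integrable one_le_two) (integrable_const _), hsq]
    simp

end Increments

end Probability

/-- The quadratic-variation based noise-level estimator
`η̂ = (1/(2n)) Σ_{i=1}^n (Y_{i/n} − Y_{(i−1)/n})²` with `Y_{i/n} = X_{i/n} + ε_i`,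
for i.i.d. mean-zero noise with variance `η` and finite fourth moment `≤ κ`
independent of the latent process `X` whose increments satisfy
`E[(Δ_i X)²] ≤ K/n` and `E[(Δ_i X)⁴] ≤ K/n`, satisfies
`E[(η̂ − η)²] ≤ C/n` for a constant `C` depending only on `η, κ, K`;
in particular `η̂ = η + O_P(n^{-1/2})`. -/
theorem noise_level_estimator_rate
    (η κ K : ℝ) (hη : 0 ≤ η) (hκ : 0 ≤ κ) (hK : 0 ≤ K) :
    ∃ C : ℝ, ∀ (n : ℕ), 0 < n →
    ∀ (Ω : Type) (_ : MeasurableSpace Ω) (P : Measure Ω), IsProbabilityMeasure P →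
    ∀ (ε X : Fin (n + 1) → Ω → ℝ),
    (∀ i, Measurable (ε i)) → (∀ i, Measurable (X i)) →
    iIndepFun ε P →
    (∀ i j, P.map (ε i) = P.map (ε j)) →
    (∀ i, ∫ ω, ε i ω ∂P = 0) →
    (∀ i, ∫ ω, (ε i ω) ^ 2 ∂P = η) →
    (∀ i, ∫ ω, (ε i ω) ^ 4 ∂P ≤ κ) →
    IndepFun (fun ω i => ε i ω) (fun ω i => X i ω) P →
    (∀ i : Fin n, ∫ ω, (X i.succ ω - X i.castSucc ω) ^ 2 ∂P ≤ K / n) →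
    (∀ i : Fin n, ∫ ω, (X i.succ ω - X i.castSucc ω) ^ 4 ∂P ≤ K / n) →
    ∫ ω, ((1 / (2 * (n : ℝ))) * ∑ i : Fin n,
        ((X i.succ ω + ε i.succ ω) - (X i.castSucc ω + ε i.castSucc ω)) ^ 2 - η) ^ 2 ∂P
      ≤ C / n := by
  refine ⟨3 * K / 4 + 18 * η * K + 36 * κ, ?_⟩
  intro n hn Ω _ P _ ε X hεm hXm hε _ hmean hvar hfour hεX hX2 hX4
  have hobs : ∀ ω (i : Fin n), X i.succ ω + ε i.succ ω - (X i.castSucc ω + ε i.castSucc ω)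
      = increment X i ω + increment ε i ω := fun ω i => by
    simp only [increment, Pi.sub_apply]; ring
  simp_rw [hobs]
  by_cases hint : Integrable
      (fun ω => (1 / (2 * (n : ℝ)) * ∑ i, (increment X i ω + increment ε i ω) ^ 2 - η) ^ 2) P
  swap
  · rw [integral_undef hint]; positivity
  have hDm := measurable_increment hXm
  have ham := measurable_increment hεm
  have hind := hεX.symm.increment
  have hL4 := memLp_four_of_integrable_estimator hDm ham hind (by positivity) hint
  have hε4 := hε.memLp_of_memLp_increment hn hεm (by norm_num) fun i => (hL4 i).2
  have hε2 : ∀ k, MemLp (ε k) 2 P := fun k => (hε4 k).mono_exponent (by norm_num)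
  have hD2 : ∀ i, MemLp (increment X i) 2 P := fun i => (hL4 i).1.mono_exponent (by norm_num)
  have ha2 : ∀ i, MemLp (increment ε i) 2 P := fun i => (hε2 _).sub (hε2 _)
  have hA := integral_sq_sum_sq_le (fun i => (hL4 i).1) hX4
  have hB := integral_sq_sum_mul_le_of_indepFun hD2 ha2 hind hX2
    (fun i => (hε.integral_increment_sq hε2 hmean hvar i).le)
    fun i j hij => hε.integral_increment_mul_eq_zero hεm (fun k => (hε2 k).integrable one_le_two)
      hmean hij
  have hC := integral_sq_sum_increment_sq_sub_le hεm hε hε4 hmean hvar hfour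
  refine (integral_sq_estimator_sub_le hn (fun i => (hL4 i).1) (fun i => (hL4 i).2) hind
    hA hB hC).trans ?_
  have hn1 : (1 : ℝ) ≤ n := by exact_mod_cast hn
  field_simp
  nlinarith [mul_nonneg (mul_nonneg hη hK) (sub_nonneg.2 hn1)]
end

section
/- If a sequence of events Ω_n satisfies P(Ω_n) → 1 and random vectors α_n satisfy E[Z·1_{Ω_n}·g(α_n)] → E[Z]·E[g(α)] for every bounded measurable Z and bounded continuous g, then α_n converges stably in law to α with α independent of the underlying σ-field; moreover, if the conditioning σ-fields H_n ↑ G and E[Z|H_n] → Z in L¹ for Z bounded G-measurable, it suffices to verify the convergence for Z measurable with respect to some H_q. -/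
open MeasureTheory Filter Topology

/-!
Truncating the conditional expectations `E[Z | H_q]` to `[-C, C]` gives bounded `H_q`-measurable
variables `Z_q` that still converge to `Z` in `L¹` (Lévy's upward theorem; truncation is
1-Lipschitz and fixes `Z`). Both `E[Z g(α_n)]` and `E[Z] E[g(α)]` are `sup |g|`-Lipschitz in `Z`
for the `L¹` norm, uniformly in `n`, and restricting a bounded integrand to `Ω_n` costs at most
its bound times `P(Ω_nᶜ) → 0`; an `ε/3` argument concludes.
-/

theorem tendsto_of_tendsto_approx {ι κ α : Type*} [PseudoMetricSpace α] {l : Filter ι}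
    {k : Filter κ} [k.NeBot] {u : ι → α} {v : κ → ι → α} {b : κ → α} {a : α} {e : κ → ℝ}
    (hv : ∀ q, Tendsto (v q) l (𝓝 (b q))) (hb : Tendsto b k (𝓝 a)) (he : Tendsto e k (𝓝 0))
    (hvu : ∀ q i, dist (v q i) (u i) ≤ e q) :
    Tendsto u l (𝓝 a) := by
  refine Metric.tendsto_nhds.2 fun ε hε => ?_
  have hε3 : 0 < ε / 3 := by positivity
  obtain ⟨q, hqe, hqb⟩ :=
    ((he.eventually (gt_mem_nhds hε3)).and (Metric.tendsto_nhds.1 hb _ hε3)).exists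
  filter_upwards [Metric.tendsto_nhds.1 (hv q) _ hε3] with i hi
  calc dist (u i) a ≤ dist (v q i) (u i) + dist (v q i) (b q) + dist (b q) a := by
        rw [dist_comm (v q i)]; exact dist_triangle4 _ _ _ _
    _ < ε := by linarith [hvu q i]

theorem abs_max_min_le (y C : ℝ) : |max (min y C) (-C)| ≤ |C| := by
  rcases le_total 0 C with hC | hC
  · rw [abs_of_nonneg hC, abs_le]
    exact ⟨le_max_right _ _, max_le (min_le_right _ _) (by linarith)⟩
  · rw [max_eq_right (by linarith [min_le_right y C]), abs_neg]

theorem abs_max_min_sub_le {y z C : ℝ} (hz : |z| ≤ C) : |max (min y C) (-C) - z| ≤ |y - z| := by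
  obtain ⟨hz₁, hz₂⟩ := abs_le.1 hz
  calc |max (min y C) (-C) - z| = |max (min y C) (-C) - max (min z C) (-C)| := by
        rw [min_eq_left hz₂, max_eq_left hz₁]
    _ ≤ |min y C - min z C| := abs_max_sub_max_le_abs _ _ _
    _ ≤ |y - z| := (abs_min_sub_min_le_max _ _ _ _).trans (by simp)

section

variable {Ω : Type*} {mΩ : MeasurableSpace Ω} {μ : Measure Ω}

theorem dist_integral_mul_le {Z Z' G : Ω → ℝ} (hZ : Integrable Z μ) (hZ' : Integrable Z' μ)
    (hG : AEStronglyMeasurable G μ) {D : ℝ} (hGD : ∀ ω, |G ω| ≤ D) :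
    dist (∫ ω, Z ω * G ω ∂μ) (∫ ω, Z' ω * G ω ∂μ) ≤ D * (eLpNorm (Z - Z') 1 μ).toReal := by
  have hGD' : ∀ᵐ ω ∂μ, ‖G ω‖ ≤ D := ae_of_all _ hGD
  rw [dist_eq_norm, ← integral_sub (hZ.mul_bdd hG hGD') (hZ'.mul_bdd hG hGD')]
  calc ‖∫ ω, (Z ω * G ω - Z' ω * G ω) ∂μ‖ ≤ ∫ ω, ‖(Z - Z') ω‖ * D ∂μ := by
        refine norm_integral_le_of_norm_le ((hZ.sub hZ').norm.mul_const D)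
          (ae_of_all _ fun ω => ?_)
        rw [← sub_mul, norm_mul, Pi.sub_apply]
        exact mul_le_mul_of_nonneg_left (hGD ω) (norm_nonneg _)
    _ = D * (eLpNorm (Z - Z') 1 μ).toReal := by
        rw [integral_mul_const, mul_comm, integral_norm_eq_lintegral_enorm (hZ.sub hZ').1,
          eLpNorm_one_eq_lintegral_enorm]

variable [IsFiniteMeasure μ]

theorem tendsto_integral_of_tendsto_setIntegral {E ι : Type*} [NormedAddCommGroup E]
    [NormedSpace ℝ E] {l : Filter ι} {A : ι → Set Ω} (hA : ∀ i, MeasurableSet (A i))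
    (hAc : Tendsto (fun i => μ (A i)ᶜ) l (𝓝 0)) {f : ι → Ω → E} {K : ℝ}
    (hf : ∀ i, AEStronglyMeasurable (f i) μ) (hfK : ∀ i ω, ‖f i ω‖ ≤ K) {L : E}
    (h : Tendsto (fun i => ∫ ω in A i, f i ω ∂μ) l (𝓝 L)) :
    Tendsto (fun i => ∫ ω, f i ω ∂μ) l (𝓝 L) := by
  refine h.congr_dist (squeeze_zero (g := fun i => K * μ.real (A i)ᶜ) (fun _ => dist_nonneg)
    (fun i => ?_) ?_)
  · rw [dist_comm, dist_eq_norm, ← integral_add_compl (hA i)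
      (.of_bound (hf i) K (ae_of_all _ (hfK i))), add_sub_cancel_left]
    exact norm_setIntegral_le_of_norm_le_const (measure_lt_top _ _) fun ω _ => hfK i ω
  · simpa [measureReal_def] using
      ((ENNReal.tendsto_toReal ENNReal.zero_ne_top).comp hAc).const_mul K

theorem exists_bounded_approx_of_iSup_eq (ℱ : Filtration ℕ mΩ) (hℱ : ⨆ q, ℱ q = mΩ) {Z : Ω → ℝ}
    (hZ : Measurable Z) {C : ℝ} (hZC : ∀ ω, |Z ω| ≤ C) :
    ∃ Zq : ℕ → Ω → ℝ, (∀ q, Measurable[ℱ q] (Zq q) ∧ ∀ ω, |Zq q ω| ≤ |C|) ∧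
      Tendsto (fun q => eLpNorm (Zq q - Z) 1 μ) atTop (𝓝 0) := by
  -- `μ[Z|ℱ q]` is bounded only almost everywhere, hence the truncation.
  refine ⟨fun q ω => max (min (μ[Z|ℱ q] ω) C) (-C),
    fun q => ⟨?_, fun ω => abs_max_min_le _ _⟩, ?_⟩
  · exact (stronglyMeasurable_condExp.measurable.min measurable_const).max measurable_const
  have hZint : Integrable Z μ := .of_bound hZ.aestronglyMeasurable C (ae_of_all _ hZC)
  have hsm : StronglyMeasurable[⨆ q, ℱ q] Z := by
    rw [hℱ]; exact hZ.stronglyMeasurable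
  refine tendsto_of_tendsto_of_tendsto_of_le_of_le tendsto_const_nhds
    (hZint.tendsto_eLpNorm_condExp hsm) (fun _ => zero_le) fun q => eLpNorm_mono fun ω => ?_
  simpa only [Pi.sub_apply, Real.norm_eq_abs] using abs_max_min_sub_le (hZC ω)

end

theorem stable_convergence_reduction_general
    {Ω : Type*} [mΩ : MeasurableSpace Ω] (P : Measure Ω) [IsProbabilityMeasure P]
    {Ω' : Type*} [MeasurableSpace Ω'] (P' : Measure Ω')
    (A : ℕ → Set Ω) (hA : ∀ n, MeasurableSet (A n))
    (hAlim : Tendsto (fun n => P (A n)) atTop (nhds 1))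
    (H : ℕ → MeasurableSpace Ω) (hHmono : Monotone H) (hHle : ∀ q, H q ≤ mΩ)
    (hHsup : (⨆ q, H q) = mΩ)
    (αn : ℕ → Ω → ℝ) (α : Ω' → ℝ)
    (hαn : ∀ n, Measurable (αn n))
    (hrestr : ∀ (q : ℕ) (Z : Ω → ℝ), Measurable[H q] Z → (∃ C, ∀ ω, |Z ω| ≤ C) →
      ∀ (g : ℝ → ℝ), Continuous g → (∃ C, ∀ x, |g x| ≤ C) →
      Tendsto (fun n => ∫ ω in A n, Z ω * g (αn n ω) ∂P) atTop
        (nhds ((∫ ω, Z ω ∂P) * (∫ ω', g (α ω') ∂P')))) :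
    ∀ (Z : Ω → ℝ), Measurable Z → (∃ C, ∀ ω, |Z ω| ≤ C) →
    ∀ (g : ℝ → ℝ), Continuous g → (∃ C, ∀ x, |g x| ≤ C) →
    Tendsto (fun n => ∫ ω, Z ω * g (αn n ω) ∂P) atTop
      (nhds ((∫ ω, Z ω ∂P) * (∫ ω', g (α ω') ∂P'))) := by
  rintro Z hZ ⟨C, hZC⟩ g hg ⟨D, hgD⟩
  obtain ⟨Zq, hZq, hZqZ⟩ :=
    exists_bounded_approx_of_iSup_eq (μ := P) ⟨H, hHmono, hHle⟩ hHsup hZ hZC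
  have hZint : Integrable Z P := .of_bound hZ.aestronglyMeasurable C (ae_of_all _ hZC)
  have hZqint (q : ℕ) : Integrable (Zq q) P :=
    .of_bound (((hZq q).1.mono (hHle q) le_rfl).aestronglyMeasurable) _ (ae_of_all _ (hZq q).2)
  have hgαn (n : ℕ) : AEStronglyMeasurable (fun ω => g (αn n ω)) P :=
    (hg.measurable.comp (hαn n)).aestronglyMeasurable
  have hAc : Tendsto (fun n => P (A n)ᶜ) atTop (𝓝 0) := by
    simpa [prob_compl_eq_one_sub (hA _)] using
      ENNReal.Tendsto.sub tendsto_const_nhds hAlim (Or.inl ENNReal.one_ne_top)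
  refine tendsto_of_tendsto_approx (k := atTop) (v := fun q n => ∫ ω, Zq q ω * g (αn n ω) ∂P)
    (b := fun q => (∫ ω, Zq q ω ∂P) * ∫ ω', g (α ω') ∂P')
    (e := fun q => D * (eLpNorm (Zq q - Z) 1 P).toReal) (fun q => ?_) ?_ ?_
    fun q n => dist_integral_mul_le (hZqint q) hZint (hgαn n) fun ω => hgD _
  · refine tendsto_integral_of_tendsto_setIntegral (K := |C| * D) hA hAc
      (fun n => (hZqint q).1.mul (hgαn n)) (fun n ω => ?_)
      (hrestr q (Zq q) (hZq q).1 ⟨_, (hZq q).2⟩ g hg ⟨D, hgD⟩)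
    rw [Real.norm_eq_abs, Pi.mul_apply, abs_mul]
    exact mul_le_mul ((hZq q).2 ω) (hgD _) (abs_nonneg _) (abs_nonneg _)
  · exact (tendsto_integral_of_L1' Z hZint.1
      (Eventually.of_forall hZqint) hZqZ).mul_const _
  · simpa using ((ENNReal.tendsto_toReal ENNReal.zero_ne_top).comp hZqZ).const_mul D

/-- Reduction lemma for stable convergence in law: if events `Ω_n` satisfy
`P(Ω_n) → 1`, the σ-fields `H_q` increase to the ambient σ-field, and
`E[Z·1_{Ω_n}·g(α_n)] → E[Z]·E[g(α)]` holds for every bounded `Z` that is measurable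
with respect to some `H_q` and every bounded continuous `g`, then
`E[Z·g(α_n)] → E[Z]·E[g(α)]` for every bounded measurable `Z` and bounded continuous
`g`, i.e. `α_n` converges stably in law to `α` with `α` independent of the underlying
σ-field (here `α` lives on an extension `(Ω', P')`). -/
theorem stable_convergence_reduction
    {Ω : Type*} [mΩ : MeasurableSpace Ω] (P : Measure Ω) [IsProbabilityMeasure P]
    {Ω' : Type*} [MeasurableSpace Ω'] (P' : Measure Ω') [IsProbabilityMeasure P']
    (A : ℕ → Set Ω) (hA : ∀ n, MeasurableSet (A n))
    (hAlim : Tendsto (fun n => P (A n)) atTop (nhds 1))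
    (H : ℕ → MeasurableSpace Ω) (hHmono : Monotone H) (hHle : ∀ q, H q ≤ mΩ)
    (hHsup : (⨆ q, H q) = mΩ)
    (αn : ℕ → Ω → ℝ) (α : Ω' → ℝ)
    (hαn : ∀ n, Measurable (αn n)) (hα : Measurable α)
    (hrestr : ∀ (q : ℕ) (Z : Ω → ℝ), Measurable[H q] Z → (∃ C, ∀ ω, |Z ω| ≤ C) →
      ∀ (g : ℝ → ℝ), Continuous g → (∃ C, ∀ x, |g x| ≤ C) →
      Tendsto (fun n => ∫ ω in A n, Z ω * g (αn n ω) ∂P) atTop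
        (nhds ((∫ ω, Z ω ∂P) * (∫ ω', g (α ω') ∂P')))) :
    ∀ (Z : Ω → ℝ), Measurable Z → (∃ C, ∀ ω, |Z ω| ≤ C) →
    ∀ (g : ℝ → ℝ), Continuous g → (∃ C, ∀ x, |g x| ≤ C) →
    Tendsto (fun n => ∫ ω, Z ω * g (αn n ω) ∂P) atTop
      (nhds ((∫ ω, Z ω ∂P) * (∫ ω', g (α ω') ∂P'))) :=
  stable_convergence_reduction_general (mΩ := mΩ) P P' A hA hAlim H hHmono hHle hHsup αn α hαn
    hrestr
end
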